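/- Let K be the standard middle-thirds Cantor set embedded in the 2-sphere S². For any two Cantor sets C, C' contained in an open disk U ⊆ S² together with a sequence of pairwise disjoint closed disks (A_n) in U Hausdorff-converging to a single point x, such that (C ∪ C') \ {x} ⊆ ⋃ A_n, ∂A_n ∩ (C ∪ C') = ∅, and each A_n contains points of both C and C': if for each n there is a homeomorphism g_n of A_n fixing ∂A_n and taking C ∩ A_n to C' ∩ A_n, and diam(A_n) → 0, then the infinite composition g = … ∘ g_1 ∘ g_0 (extended by the identity outside ⋃A_n) is a well-defined homeomorphism of U taking C to C'. -/

import Mathlib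

/-!
Glue the homeomorphisms `g n` into one map of the whole space, equal to `g n` on `A n` and to the
identity elsewhere. It is continuous at interior points of some `A n` because it agrees with `g n`
there; every other point is fixed, and near such a point only finitely many `A n` are large, the
others having diameter below `ε` so that the map moves their points by less than `ε`. Gluing the
inverses in the same way gives the inverse, and inverses of continuous bijections of compacta are
continuous. Since the `A n` shrink to `x` and meet both Cantor sets, `x ∈ C ∩ C'`; as
`C ∪ C' ⊆ {x} ∪ ⋃ A n`, the glued map carries `C` onto `C'`.
-/

open Filter Function Topology Set Metric

theorem Set.BijOn.continuousOn_invFunOn {X Y : Type*} [TopologicalSpace X] [Nonempty X]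
    [TopologicalSpace Y] [T2Space Y] {f : X → Y} {s : Set X} {t : Set Y} (hf : BijOn f s t)
    (hs : IsCompact s) (hfc : ContinuousOn f s) : ContinuousOn (invFunOn f s) t := by
  refine continuousOn_iff_isClosed.2 fun K hK => ⟨f '' (K ∩ s), ?_, ?_⟩
  · exact ((hs.inter_left hK).image_of_continuousOn (hfc.mono inter_subset_right)).isClosed
  · ext y
    constructor
    · rintro ⟨hyK, hyt⟩
      exact ⟨⟨_, ⟨hyK, hf.surjOn.mapsTo_invFunOn hyt⟩, hf.invOn_invFunOn.2 hyt⟩, hyt⟩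
    · rintro ⟨⟨z, ⟨hzK, hzs⟩, rfl⟩, hyt⟩
      exact ⟨by rwa [mem_preimage, hf.invOn_invFunOn.1 hzs], hyt⟩

theorem Set.LeftInvOn.eqOn_id {α : Type*} {f g : α → α} {s t : Set α} (h : LeftInvOn g f s)
    (hts : t ⊆ s) (hf : EqOn f id t) : EqOn g id t := fun y hy => by
  simpa [hf hy] using h (hts hy)

theorem Set.diff_eq_singleton_diff {α : Type*} {C S : Set α} {x : α} (hx : x ∈ C)
    (hC : C \ {x} ⊆ S) : C \ S = {x} \ S := by
  ext y
  by_cases hy : y = x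
  · simp [hy, hx]
  · simpa [hy] using fun hyC => hC ⟨hyC, hy⟩

theorem IsClosed.mem_of_tendsto_hausdorffDist {X ι : Type*} [MetricSpace X] {l : Filter ι}
    [l.NeBot] {C : Set X} (hC : IsClosed C) {A : ι → Set X}
    (hA : ∀ i, Bornology.IsBounded (A i))
    (hAC : ∀ i, (A i ∩ C).Nonempty) {x : X}
    (hlim : Tendsto (fun i => hausdorffDist (A i) {x}) l (𝓝 0)) : x ∈ C := by
  choose c hcA hcC using hAC
  have hdist : ∀ i, dist (c i) x ≤ hausdorffDist (A i) {x} := fun i => by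
    simpa using infDist_le_hausdorffDist_of_mem (hcA i)
      (hausdorffEDist_ne_top_of_nonempty_of_bounded ⟨_, hcA i⟩ (singleton_nonempty x) (hA i)
        Bornology.isBounded_singleton)
  have hc : Tendsto c l (𝓝 x) :=
    tendsto_iff_dist_tendsto_zero.2 (squeeze_zero (fun _ => dist_nonneg) hdist hlim)
  exact hC.mem_of_tendsto hc (Eventually.of_forall hcC)

section Glue

variable {X ι : Type*} {A : ι → Set X} {f : ι → X → X}

open Classical in
noncomputable def glueMaps (A : ι → Set X) (f : ι → X → X) (y : X) : X :=
  if h : ∃ i, y ∈ A i then f h.choose y else y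

theorem glueMaps_of_mem (hA : Pairwise (Disjoint on A)) {i : ι} {y : X} (hy : y ∈ A i) :
    glueMaps A f y = f i y := by
  have h : ∃ j, y ∈ A j := ⟨i, hy⟩
  rw [glueMaps, dif_pos h, hA.eq (not_disjoint_iff.2 ⟨y, h.choose_spec, hy⟩)]

theorem glueMaps_of_notMem {y : X} (hy : y ∉ ⋃ i, A i) : glueMaps A f y = y :=
  dif_neg (by simpa using hy)

theorem mapsTo_glueMaps (hA : Pairwise (Disjoint on A)) {U : Set X}
    (hf : ∀ i, MapsTo (f i) (A i) U) : MapsTo (glueMaps A f) U U := fun y hy => by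
  by_cases hyA : y ∈ ⋃ i, A i
  · obtain ⟨i, hi⟩ := mem_iUnion.1 hyA
    rw [glueMaps_of_mem hA hi]
    exact hf i hi
  · rwa [glueMaps_of_notMem hyA]

theorem glueMaps_leftInverse (hA : Pairwise (Disjoint on A)) {g : ι → X → X}
    (hf : ∀ i, MapsTo (f i) (A i) (A i)) (hgf : ∀ i, LeftInvOn (g i) (f i) (A i)) :
    Function.LeftInverse (glueMaps A g) (glueMaps A f) := fun y => by
  by_cases hyA : y ∈ ⋃ i, A i
  · obtain ⟨i, hi⟩ := mem_iUnion.1 hyA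
    rw [glueMaps_of_mem hA hi, glueMaps_of_mem hA (hf i hi), hgf i hi]
  · rw [glueMaps_of_notMem hyA, glueMaps_of_notMem hyA]

theorem image_glueMaps (hA : Pairwise (Disjoint on A)) {C C' : Set X}
    (hf : ∀ i, f i '' (C ∩ A i) = C' ∩ A i) (hout : C \ ⋃ i, A i = C' \ ⋃ i, A i) :
    glueMaps A f '' C = C' := by
  ext z
  constructor
  · rintro ⟨y, hyC, rfl⟩
    by_cases hyA : y ∈ ⋃ i, A i
    · obtain ⟨i, hi⟩ := mem_iUnion.1 hyA
      rw [glueMaps_of_mem hA hi]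
      exact ((hf i).subset ⟨y, ⟨hyC, hi⟩, rfl⟩).1
    · rw [glueMaps_of_notMem hyA]
      exact (hout.subset ⟨hyC, hyA⟩).1
  · intro hz
    by_cases hzA : z ∈ ⋃ i, A i
    · obtain ⟨i, hi⟩ := mem_iUnion.1 hzA
      obtain ⟨y, ⟨hyC, hyi⟩, rfl⟩ := (hf i).superset ⟨hz, hi⟩
      exact ⟨y, hyC, glueMaps_of_mem hA hyi⟩
    · exact ⟨z, (hout.superset ⟨hz, hzA⟩).1, glueMaps_of_notMem hzA⟩

theorem continuousAt_glueMaps_of_mem_interior [TopologicalSpace X]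
    (hA : Pairwise (Disjoint on A)) {i : ι} {p : X} (hfc : ContinuousOn (f i) (A i))
    (hp : p ∈ interior (A i)) :
    ContinuousAt (glueMaps A f) p := by
  have hAp : A i ∈ 𝓝 p := mem_interior_iff_mem_nhds.1 hp
  exact (hfc.continuousAt hAp).congr
    (eventually_of_mem hAp fun y hy => (glueMaps_of_mem hA hy).symm)

variable [MetricSpace X]

section Continuity

variable (hA : Pairwise (Disjoint on A)) (hAc : ∀ i, IsClosed (A i))
  (hfix : ∀ i, EqOn (f i) id (frontier (A i))) {p : X} (hp : ∀ i, p ∉ interior (A i))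
include hA hAc hfix hp

theorem glueMaps_eq_self_of_forall_notMem_interior : glueMaps A f p = p := by
  by_cases hpA : p ∈ ⋃ i, A i
  · obtain ⟨i, hi⟩ := mem_iUnion.1 hpA
    rw [glueMaps_of_mem hA hi]
    exact hfix i ((hAc i).frontier_eq ▸ ⟨hi, hp i⟩)
  · exact glueMaps_of_notMem hpA

theorem continuousAt_glueMaps_of_forall_notMem_interior (hAb : ∀ i, Bornology.IsBounded (A i))
    (hdiam : Tendsto (fun i => diam (A i)) cofinite (𝓝 0))
    (hfc : ∀ i, ContinuousOn (f i) (A i)) (hfm : ∀ i, MapsTo (f i) (A i) (A i)) :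
    ContinuousAt (glueMaps A f) p := by
  rw [ContinuousAt, glueMaps_eq_self_of_forall_notMem_interior hA hAc hfix hp, Metric.tendsto_nhds]
  intro ε hε
  have hlarge : {i | ε / 2 ≤ diam (A i)}.Finite := by
    simpa using eventually_cofinite.1 (hdiam.eventually (gt_mem_nhds (half_pos hε)))
  -- If `p ∈ A i` then `p ∈ ∂A i`, so `f i` fixes `p`.
  have hnear : ∀ i, ∀ᶠ y in 𝓝 p, y ∈ A i → dist (f i y) p < ε := fun i => by
    by_cases hpi : p ∈ A i
    · have hfp : f i p = p := hfix i ((hAc i).frontier_eq ▸ ⟨hpi, hp i⟩)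
      have := Metric.tendsto_nhds.1 (hfc i p hpi) ε hε
      rwa [hfp, eventually_nhdsWithin_iff] at this
    · filter_upwards [(hAc i).isOpen_compl.mem_nhds hpi] with y hy hyi using absurd hyi hy
  filter_upwards [ball_mem_nhds p (half_pos hε),
    (eventually_all_finite hlarge).2 fun i _ => hnear i] with y hy hfin
  by_cases hyA : y ∈ ⋃ i, A i
  · obtain ⟨i, hi⟩ := mem_iUnion.1 hyA
    rw [glueMaps_of_mem hA hi]
    by_cases hi_large : ε / 2 ≤ diam (A i)
    · exact hfin i hi_large hi
    · calc dist (f i y) p ≤ dist (f i y) y + dist y p := dist_triangle _ _ _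
        _ < ε / 2 + ε / 2 :=
          add_lt_add_of_le_of_lt
            ((dist_le_diam_of_mem (hAb i) (hfm i hi) hi).trans (not_le.1 hi_large).le) hy
        _ = ε := add_halves ε
  · rw [glueMaps_of_notMem hyA]
    exact (mem_ball.1 hy).trans (half_lt_self hε)

end Continuity

theorem continuous_glueMaps (hA : Pairwise (Disjoint on A)) (hAc : ∀ i, IsCompact (A i))
    (hdiam : Tendsto (fun i => diam (A i)) cofinite (𝓝 0))
    (hfc : ∀ i, ContinuousOn (f i) (A i)) (hfm : ∀ i, MapsTo (f i) (A i) (A i))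
    (hfix : ∀ i, EqOn (f i) id (frontier (A i))) : Continuous (glueMaps A f) := by
  refine continuous_iff_continuousAt.2 fun p => ?_
  by_cases hp : ∃ i, p ∈ interior (A i)
  · obtain ⟨i, hi⟩ := hp
    exact continuousAt_glueMaps_of_mem_interior hA (hfc i) hi
  · exact continuousAt_glueMaps_of_forall_notMem_interior hA (fun i => (hAc i).isClosed) hfix
      (not_exists.1 hp) (fun i => (hAc i).isBounded) hdiam hfc hfm

noncomputable def glueHomeomorph [Nonempty X] (hA : Pairwise (Disjoint on A))
    (hAc : ∀ i, IsCompact (A i))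
    (hdiam : Tendsto (fun i => diam (A i)) cofinite (𝓝 0))
    (hfc : ∀ i, ContinuousOn (f i) (A i)) (hfb : ∀ i, BijOn (f i) (A i) (A i))
    (hfix : ∀ i, EqOn (f i) id (frontier (A i))) : X ≃ₜ X where
  toFun := glueMaps A f
  invFun := glueMaps A fun i => invFunOn (f i) (A i)
  left_inv := glueMaps_leftInverse hA (fun i => (hfb i).mapsTo) fun i => (hfb i).invOn_invFunOn.1
  right_inv := glueMaps_leftInverse hA (fun i => (hfb i).surjOn.mapsTo_invFunOn)
    fun i => (hfb i).invOn_invFunOn.2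
  continuous_toFun := continuous_glueMaps hA hAc hdiam hfc (fun i => (hfb i).mapsTo) hfix
  continuous_invFun := continuous_glueMaps hA hAc hdiam
    (fun i => (hfb i).continuousOn_invFunOn (hAc i) (hfc i))
    (fun i => (hfb i).surjOn.mapsTo_invFunOn)
    fun i => (hfb i).invOn_invFunOn.1.eqOn_id (hAc i).isClosed.frontier_subset (hfix i)

end Glue

theorem stmt8_general {X : Type*} [MetricSpace X] (U : Set X)
    (C C' : Set X) (hCU : C ⊆ U)
    -- `C` and `C'` are Cantor sets: compact, totally disconnected, perfect
    (hC : IsCompact C ∧ IsTotallyDisconnected C ∧ Perfect C)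
    (hC' : IsCompact C' ∧ IsTotallyDisconnected C' ∧ Perfect C')
    (x : X)
    (A : ℕ → Set X)
    (hAU : ∀ n, A n ⊆ U)
    (hAcpt : ∀ n, IsCompact (A n))
    (hAdisj : ∀ m n, m ≠ n → Disjoint (A m) (A n))
    (hAHaus : Tendsto (fun n => Metric.hausdorffDist (A n) {x}) atTop (nhds 0))
    (hcover : (C ∪ C') \ {x} ⊆ ⋃ n, A n)
    (hmeet : ∀ n, (A n ∩ C).Nonempty ∧ (A n ∩ C').Nonempty)
    (g : ℕ → X → X)
    (hgcont : ∀ n, ContinuousOn (g n) (A n))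
    (hgbij : ∀ n, Set.BijOn (g n) (A n) (A n))
    (hgfix : ∀ n, Set.EqOn (g n) id (frontier (A n)))
    (hgC : ∀ n, g n '' (C ∩ A n) = C' ∩ A n)
    (hdiam : Tendsto (fun n => Metric.diam (A n)) atTop (nhds 0)) :
    ∃ G : U ≃ₜ U,
      (∀ (n : ℕ) (p : U), (p : X) ∈ A n → ((G p : X) = g n (p : X))) ∧
      (∀ p : U, (p : X) ∉ (⋃ n, A n) → G p = p) ∧
      (Subtype.val '' ((fun p => G p) '' (Subtype.val ⁻¹' C : Set U)) = C') := by
  have : Nonempty X := ⟨x⟩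
  let e := glueHomeomorph hAdisj hAcpt (Nat.cofinite_eq_atTop ▸ hdiam) hgcont hgbij hgfix
  have hU : MapsTo e U U :=
    mapsTo_glueMaps hAdisj fun n => (hgbij n).mapsTo.mono_right (hAU n)
  have hU' : MapsTo e.symm U U :=
    mapsTo_glueMaps hAdisj fun n => (hgbij n).surjOn.mapsTo_invFunOn.mono_right (hAU n)
  have heU : U = e ⁻¹' U :=
    hU.subset_preimage.antisymm fun y hy => e.symm_apply_apply y ▸ hU' hy
  have hxC := hC.1.isClosed.mem_of_tendsto_hausdorffDist (fun n => (hAcpt n).isBounded)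
    (fun n => (hmeet n).1) hAHaus
  have hxC' := hC'.1.isClosed.mem_of_tendsto_hausdorffDist (fun n => (hAcpt n).isBounded)
    (fun n => (hmeet n).2) hAHaus
  have hout : C \ ⋃ n, A n = C' \ ⋃ n, A n :=
    (diff_eq_singleton_diff hxC ((sdiff_subset_sdiff_left subset_union_left).trans hcover)).trans
      (diff_eq_singleton_diff hxC' ((sdiff_subset_sdiff_left subset_union_right).trans hcover)).symm
  refine ⟨e.sets heU, fun n p hp => glueMaps_of_mem hAdisj hp,
    fun p hp => Subtype.ext (glueMaps_of_notMem hp), ?_⟩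
  calc Subtype.val '' ((fun p => e.sets heU p) '' (Subtype.val ⁻¹' C : Set U))
      = e '' (Subtype.val '' (Subtype.val ⁻¹' C : Set U)) := by simp only [image_image]; rfl
    _ = e '' C := by rw [Subtype.image_preimage_coe, inter_eq_right.2 hCU]
    _ = C' := image_glueMaps hAdisj hgC hout

/-- Let `U` be an open disk (in the sphere) containing two Cantor sets `C, C'`, a point `x`,
and pairwise disjoint closed disks `A n` Hausdorff-converging to `{x}` with
`(C ∪ C') \ {x} ⊆ ⋃ A n`, `∂Aₙ ∩ (C ∪ C') = ∅`, each `A n` meeting both `C` and `C'`.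
If for each `n` there is a homeomorphism `g n` of `A n` fixing `∂Aₙ` and taking `C ∩ A n`
to `C' ∩ A n`, and `diam (A n) → 0`, then the infinite composition (extended by the identity
outside `⋃ A n`) is a well-defined homeomorphism of `U` taking `C` to `C'`. -/
theorem stmt8 {X : Type*} [MetricSpace X] (U : Set X) (hU : IsOpen U)
    (C C' : Set X) (hCU : C ⊆ U) (hC'U : C' ⊆ U)
    -- `C` and `C'` are Cantor sets: compact, totally disconnected, perfect
    (hC : IsCompact C ∧ IsTotallyDisconnected C ∧ Perfect C)
    (hC' : IsCompact C' ∧ IsTotallyDisconnected C' ∧ Perfect C')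
    (x : X) (hxU : x ∈ U)
    (A : ℕ → Set X)
    (hAU : ∀ n, A n ⊆ U)
    (hAclosed : ∀ n, IsClosed (A n))
    (hAcpt : ∀ n, IsCompact (A n))
    (hAdisj : ∀ m n, m ≠ n → Disjoint (A m) (A n))
    (hAHaus : Tendsto (fun n => Metric.hausdorffDist (A n) {x}) atTop (nhds 0))
    (hfront : ∀ n, frontier (A n) ∩ (C ∪ C') = ∅)
    (hcover : (C ∪ C') \ {x} ⊆ ⋃ n, A n)
    (hmeet : ∀ n, (A n ∩ C).Nonempty ∧ (A n ∩ C').Nonempty)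
    (g : ℕ → X → X)
    (hgcont : ∀ n, ContinuousOn (g n) (A n))
    (hgbij : ∀ n, Set.BijOn (g n) (A n) (A n))
    (hgfix : ∀ n, Set.EqOn (g n) id (frontier (A n)))
    (hgC : ∀ n, g n '' (C ∩ A n) = C' ∩ A n)
    (hdiam : Tendsto (fun n => Metric.diam (A n)) atTop (nhds 0)) :
    ∃ G : U ≃ₜ U,
      (∀ (n : ℕ) (p : U), (p : X) ∈ A n → ((G p : X) = g n (p : X))) ∧
      (∀ p : U, (p : X) ∉ (⋃ n, A n) → G p = p) ∧
      (Subtype.val '' ((fun p => G p) '' (Subtype.val ⁻¹' C : Set U)) = C') :=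
  stmt8_general U C C' hCU hC hC' x A hAU hAcpt hAdisj hAHaus hcover hmeet g hgcont hgbij hgfix hgC
    hdiam
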